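/- arXiv:0910.5543 — 4 statements merged into one kernel-verified Lean document; each statement's English description precedes it below -/
import Mathlib

section
/- The least map is injective on exponentials: for any finite point set V in ℝ^n, the restriction map from Π(V) to functions on V, f ↦ f|_V, is a linear isomorphism between Π(V) and ℂ^V; in particular dim Π(V) = #V. -/
open MvPolynomial

attribute [local instance] Classical.propDecidable

noncomputable section

/-- The linear polynomial `t ↦ v ⬝ t` attached to a vector `v ∈ ℝⁿ`. -/
def lin (n : ℕ) (v : Fin n → ℝ) : MvPolynomial (Fin n) ℂ :=
  ∑ i, MvPolynomial.C (v i : ℂ) * MvPolynomial.X i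

/-- `p_Y`, the product of the linear polynomials over an index set `Y`. -/
def pProd {n : ℕ} {ι : Type*} (x : ι → Fin n → ℝ) (Y : Finset ι) : MvPolynomial (Fin n) ℂ :=
  ∏ i ∈ Y, lin n (x i)

/-- The differential operator `p(D)` (substitute `∂/∂tᵢ` for `tᵢ` in `p`). -/
def pDop {n : ℕ} (p : MvPolynomial (Fin n) ℂ) : Module.End ℂ (MvPolynomial (Fin n) ℂ) :=
  (AddMonoidAlgebra.coeff p).sum fun m c =>
    c • (((List.finRange n).map fun i =>
      ((MvPolynomial.pderiv i).toLinearMap : Module.End ℂ (MvPolynomial (Fin n) ℂ)) ^ m i).prod)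

/-- The kernel of a polynomial ideal: all `q` with `p(D)q = 0` for every `p ∈ I`. -/
def dKer {n : ℕ} (I : Ideal (MvPolynomial (Fin n) ℂ)) : Submodule ℂ (MvPolynomial (Fin n) ℂ) :=
  ⨅ p ∈ I, LinearMap.ker (pDop p)

/-- Standard inner product on `ℝⁿ`. -/
def dotp {n : ℕ} (u v : Fin n → ℝ) : ℝ := ∑ i, u i * v i

/-- `B` is a basis drawn from the multiset `x`. -/
def IsBasisSet {n : ℕ} {ι : Type*} (x : ι → Fin n → ℝ) (B : Finset ι) : Prop :=
  LinearIndependent ℝ (fun b : {i // i ∈ B} => x b.1) ∧ Submodule.span ℝ (x '' ↑B) = ⊤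

/-- `I` is an independent subset of the multiset `x`. -/
def IsIndepSet {n : ℕ} {ι : Type*} (x : ι → Fin n → ℝ) (I : Finset ι) : Prop :=
  LinearIndependent ℝ (fun b : {i // i ∈ I} => x b.1)

/-- `F` is a facet hyperplane of `X`. -/
def IsFacet {n : ℕ} {ι : Type*} (x : ι → Fin n → ℝ) (F : Submodule ℝ (Fin n → ℝ)) : Prop :=
  Module.finrank ℝ F = n - 1 ∧ ∃ Y : Finset ι, Submodule.span ℝ (x '' ↑Y) = F

/-- `η` is a (nonzero) normal to the subspace `F`. -/
def IsNormal {n : ℕ} (η : Fin n → ℝ) (F : Submodule ℝ (Fin n → ℝ)) : Prop :=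
  η ≠ 0 ∧ ∀ v ∈ F, dotp η v = 0

/-- `m(F)`: number of elements of `X` outside a subspace `F`. -/
def mult {n : ℕ} {ι : Type*} [Fintype ι] (x : ι → Fin n → ℝ) (F : Submodule ℝ (Fin n → ℝ)) : ℕ :=
  (Finset.univ.filter fun i => x i ∉ F).card

/-- The central ideal `I(X)`. -/
def centralIdeal {n : ℕ} {ι : Type*} [Fintype ι] (x : ι → Fin n → ℝ) :
    Ideal (MvPolynomial (Fin n) ℂ) :=
  Ideal.span {p | ∃ F η, IsFacet x F ∧ IsNormal η F ∧ p = lin n η ^ mult x F}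

/-- The central `P`-space of the sub-multiset indexed by `A`. -/
def centralPOn {n : ℕ} {ι : Type*} [Fintype ι] [DecidableEq ι] (x : ι → Fin n → ℝ)
    (A : Finset ι) : Submodule ℂ (MvPolynomial (Fin n) ℂ) :=
  Submodule.span ℂ
    {p | ∃ Y : Finset ι, Y ⊆ A ∧
      Module.finrank ℝ (Submodule.span ℝ (x '' ↑(A \ Y))) = n ∧ p = pProd x Y}

/-- `X(Y)` with respect to the order on indices. -/
def XofY {n N : ℕ} (x : Fin N → Fin n → ℝ) (Y : Finset (Fin N)) : Finset (Fin N) :=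
  Finset.univ.filter fun i => i ∉ Y ∧ x i ∉ Submodule.span ℝ (x '' {j | j ∈ Y ∧ j < i})

/-- the valuation `val(Y) = #X(Y)`. -/
def valu {n N : ℕ} (x : Fin N → Fin n → ℝ) (Y : Finset (Fin N)) : ℕ := (XofY x Y).card

/-- `Q_Y := p_{X(Y)}`. -/
def QB {n N : ℕ} (x : Fin N → Fin n → ℝ) (Y : Finset (Fin N)) : MvPolynomial (Fin n) ℂ :=
  pProd x (XofY x Y)

/-- A semi-external collection of independent sets. -/
def SemiExternal {n N : ℕ} (x : Fin N → Fin n → ℝ) (I' : Set (Finset (Fin N))) : Prop :=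
  (∀ I ∈ I', IsIndepSet x I) ∧
  ∀ I ∈ I', ∀ J : Finset (Fin N), IsIndepSet x J →
    Submodule.span ℝ (x '' ↑I) ≤ Submodule.span ℝ (x '' ↑J) → J ∈ I'

/-- `P₊(X, 𝕀')`. -/
def PplusOn {n N : ℕ} (x : Fin N → Fin n → ℝ) (I' : Set (Finset (Fin N))) :
    Submodule ℂ (MvPolynomial (Fin n) ℂ) :=
  Submodule.span ℂ {p | ∃ Y : Finset (Fin N), (∃ I ∈ I', Y ∩ I = ∅) ∧ p = pProd x Y}

/-- `Π⁰_j(S^⊥)`: homogeneous polynomials of degree `j` annihilated by directional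
derivatives along `S`. -/
def homPerp (n j : ℕ) (S : Submodule ℝ (Fin n → ℝ)) : Set (MvPolynomial (Fin n) ℂ) :=
  {p | p ∈ MvPolynomial.homogeneousSubmodule (Fin n) ℂ j ∧ ∀ η ∈ S, pDop (lin n η) p = 0}

/-- `Π⁰_j(W)`: homogeneous polynomials of degree `j` which are functions on `W`
(annihilated by derivatives along `W^⊥`). -/
def homOn (n j : ℕ) (W : Submodule ℝ (Fin n → ℝ)) : Set (MvPolynomial (Fin n) ℂ) :=
  {p | p ∈ MvPolynomial.homogeneousSubmodule (Fin n) ℂ j ∧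
    ∀ η : Fin n → ℝ, (∀ w ∈ W, dotp η w = 0) → pDop (lin n η) p = 0}

/-- `S(X,𝕀')`: spans of independent sets outside `𝕀'`. -/
def exSpans {n N : ℕ} (x : Fin N → Fin n → ℝ) (I' : Set (Finset (Fin N))) :
    Set (Submodule ℝ (Fin n → ℝ)) :=
  {S | ∃ I : Finset (Fin N), IsIndepSet x I ∧ I ∉ I' ∧ Submodule.span ℝ (x '' ↑I) = S}

/-- The external ideal `I₊(X)`. -/
def IplusIdeal {n : ℕ} {ι : Type*} [Fintype ι] (x : ι → Fin n → ℝ) :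
    Ideal (MvPolynomial (Fin n) ℂ) :=
  Ideal.span {p | ∃ F η, IsFacet x F ∧ IsNormal η F ∧ p = lin n η ^ (mult x F + 1)}

/-- The semi-external ideal `I₊(X,𝕀')`. -/
def IplusOn {n N : ℕ} (x : Fin N → Fin n → ℝ) (I' : Set (Finset (Fin N))) :
    Ideal (MvPolynomial (Fin n) ℂ) :=
  IplusIdeal x ⊔ Ideal.span {p | ∃ S ∈ exSpans x I', p ∈ homPerp n (mult x S) S}

/-- `expPart V c j`: the degree-`j` homogeneous part of `∑_{v ∈ V} c_v e_v`. -/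
def expPart (n : ℕ) (V : Finset (Fin n → ℝ)) (c : (Fin n → ℝ) → ℂ) (j : ℕ) :
    MvPolynomial (Fin n) ℂ :=
  ((j.factorial : ℂ))⁻¹ • ∑ v ∈ V, c v • (lin n v) ^ j

/-- The least space `Π(V)` of a finite point set `V`. -/
def leastSpace (n : ℕ) (V : Finset (Fin n → ℝ)) : Submodule ℂ (MvPolynomial (Fin n) ℂ) :=
  Submodule.span ℂ
    {p | ∃ (c : (Fin n → ℝ) → ℂ) (j₀ : ℕ),
      p = expPart n V c j₀ ∧ p ≠ 0 ∧ ∀ j < j₀, expPart n V c j = 0}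

/-- Simplicity of the arrangement `H(X,λ)`. -/
def SimpleArrangement {n N : ℕ} (x : Fin N → Fin n → ℝ) (lam : Fin N → ℝ) : Prop :=
  ∀ Y : Finset (Fin N), (∃ t : Fin n → ℝ, ∀ i ∈ Y, dotp (x i) t = lam i) →
    LinearIndependent ℝ (fun i : {i // i ∈ Y} => x i.1)

/-- `b` is `I`-internally active in `B`. -/
def IActive {n N : ℕ} (x : Fin N → Fin n → ℝ) (Iset B : Finset (Fin N)) (b : Fin N) : Prop :=
  b ∈ B ∧ b ∈ Iset ∧ ∀ j, x j ∉ Submodule.span ℝ (x '' ↑(B.erase b)) → j ≤ b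

/-- `B` is an `I`-internal basis. -/
def IInternal {n N : ℕ} (x : Fin N → Fin n → ℝ) (Iset B : Finset (Fin N)) : Prop :=
  IsBasisSet x B ∧ ∀ b, ¬ IActive x Iset B b

/-- The semi-internal space `P₋(X,I)`. -/
def Pminus {n N : ℕ} (x : Fin N → Fin n → ℝ) (Iset : Finset (Fin N)) :
    Submodule ℂ (MvPolynomial (Fin n) ℂ) :=
  ⨅ b ∈ Iset, centralPOn x (Finset.univ.erase b)

/-- The semi-internal ideal `I₋(X,I)`. -/
def IminusOn {n N : ℕ} (x : Fin N → Fin n → ℝ) (Iset : Finset (Fin N)) :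
    Ideal (MvPolynomial (Fin n) ℂ) :=
  centralIdeal x ⊔
    Ideal.span {p | ∃ F η, IsFacet x F ∧ IsNormal η F ∧ ¬ (x '' ↑Iset ⊆ ↑F) ∧
      p = lin n η ^ (mult x F - 1)}

/-- The semi-internal ideal `J₋(X,I)` of `I`-long polynomials. -/
def JminusOn {n N : ℕ} (x : Fin N → Fin n → ℝ) (Iset : Finset (Fin N)) :
    Ideal (MvPolynomial (Fin n) ℂ) :=
  Ideal.span {p | ∃ Y : Finset (Fin N),
    (∀ B, IInternal x Iset B → (Y ∩ B).Nonempty) ∧ p = pProd x Y}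

/-- Greedy completion `ex(I)` of an independent set by the auxiliary ordered basis `b0`. -/
def exComp {n N : ℕ} (x : Fin N → Fin n → ℝ) (b0 : Fin n → Fin n → ℝ) (I : Finset (Fin N)) :
    Finset (Fin N ⊕ Fin n) :=
  I.image Sum.inl ∪
    (Finset.univ.filter fun k : Fin n =>
      b0 k ∉ Submodule.span ℝ (x '' ↑I ∪ b0 '' {j | j < k})).image Sum.inr


/-!
The apolar pairing `⟨p, q⟩ = ∑ₘ m! pₘ qₘ` satisfies `⟨p, (v·t)ʲ⟩ = j! p(v)` for `p` homogeneous of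
degree `j`. Writing `Eⱼ(c)` for the degree-`j` part of `∑ᵥ cᵥ eᵥ`, this gives
`∑ᵥ cᵥ p(v) = ∑ⱼ ⟨pⱼ, Eⱼ(c)⟩`, and `⟨q, q̄⟩ > 0` for `q ≠ 0`.

If `p ∈ Π(V)` vanishes on `V`, its top component is `E_d(c)` with `Eⱼ(c) = 0` for `j < d`; testing
against `c̄` leaves only `⟨p_d, p̄_d⟩ = 0`, so `p = 0`. Conversely, if `c ≠ 0` annihilates the image
of `Π(V)`, some `Eⱼ(c)` is nonzero; at the least such `d`, `q = E_d(c̄) = conj E_d(c)` lies in `Π(V)`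
and `∑ᵥ cᵥ q(v) = ⟨q, q̄⟩ ≠ 0`.
-/

namespace MvPolynomial

open Finset
open scoped Nat

section Apolar

variable {σ R : Type*} [CommSemiring R]

def apolar (p : MvPolynomial σ R) : MvPolynomial σ R →ₗ[R] R :=
  ∑ m ∈ p.support, (p.coeff m * (m.prod fun _ k => k ! : ℕ)) • lcoeff R m

theorem apolar_apply (p q : MvPolynomial σ R) :
    apolar p q = ∑ m ∈ p.support, p.coeff m * (m.prod fun _ k => k ! : ℕ) * q.coeff m := by
  simp [apolar, LinearMap.sum_apply, mul_assoc]

theorem apolar_sum_smul_X_pow [Fintype σ] {p : MvPolynomial σ R} {j : ℕ}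
    (hp : p.IsHomogeneous j) (a : σ → R) :
    apolar p ((∑ i, a i • X i) ^ j) = j ! * eval a p := by
  rw [apolar_apply, eval_eq', Finset.mul_sum]
  refine Finset.sum_congr rfl fun m hm => ?_
  have hdeg : ∑ i, m i = j := by
    rw [← Finsupp.degree_eq_sum, Finsupp.degree_eq_weight_one]
    exact hp (mem_support_iff.mp hm)
  have hfac : (∏ i, (m i)!) * m.multinomial = j ! := by
    rw [Finsupp.multinomial_eq_of_support_subset (subset_univ _), Nat.multinomial_spec, hdeg]
  rw [coeff_linearCombination_X_pow_of_fintype,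
    if_pos (by rwa [Finsupp.sum_fintype _ _ (by simp)]),
    Finsupp.prod_fintype _ _ (by simp), Finsupp.prod_fintype _ _ (by simp), ← hfac]
  push_cast
  ring

theorem apolar_self_map_conj_ne_zero {q : MvPolynomial σ ℂ} (hq : q ≠ 0) :
    apolar q (map (starRingEnd ℂ) q) ≠ 0 := by
  have hreal : apolar q (map (starRingEnd ℂ) q) =
      ((∑ m ∈ q.support, Complex.normSq (q.coeff m) * (m.prod fun _ k => k ! : ℕ) : ℝ) : ℂ) := by
    rw [apolar_apply, Complex.ofReal_sum]
    refine sum_congr rfl fun m _ => ?_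
    rw [coeff_map, Complex.ofReal_mul, Complex.normSq_eq_conj_mul_self, Complex.ofReal_natCast]
    ring
  rw [hreal, Complex.ofReal_ne_zero]
  refine (sum_pos (fun m hm => mul_pos (Complex.normSq_pos.mpr (mem_support_iff.mp hm)) ?_)
    (support_nonempty.mpr hq)).ne'
  exact Nat.cast_pos.mpr (Finset.prod_pos fun i _ => Nat.factorial_pos _)

end Apolar

variable {σ : Type*}

theorem homogeneousComponent_totalDegree_ne_zero {R : Type*} [CommSemiring R]
    {p : MvPolynomial σ R} (hp : p ≠ 0) : homogeneousComponent p.totalDegree p ≠ 0 := by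
  obtain ⟨m, hm, hdeg⟩ := Finset.exists_mem_eq_sup p.support (support_nonempty.mpr hp)
    fun s => s.sum fun _ e => e
  intro h
  have hcoeff := congrArg (coeff m) h
  rw [coeff_homogeneousComponent, if_pos (show m.degree = p.totalDegree from hdeg.symm),
    coeff_zero] at hcoeff
  exact mem_support_iff.mp hm hcoeff

theorem exists_eval_ne_zero_forall_eval_eq_zero {K : Type*} [CommRing K] [IsDomain K]
    (S : Finset (σ → K)) {x : σ → K} (hx : x ∉ S) :
    ∃ p : MvPolynomial σ K, eval x p ≠ 0 ∧ ∀ y ∈ S, eval y p = 0 := by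
  induction S using Finset.induction_on with
  | empty => exact ⟨1, by simp, by simp⟩
  | insert y S _ ih =>
    obtain ⟨p, hpx, hpS⟩ := ih fun h => hx (mem_insert_of_mem h)
    obtain ⟨i, hi⟩ := Function.ne_iff.mp (ne_of_mem_of_not_mem (mem_insert_self y S) hx)
    refine ⟨(X i - C (y i)) * p, ?_, ?_⟩
    · simpa [sub_eq_zero, Ne.symm hi] using hpx
    · simp_all

end MvPolynomial

theorem LinearMap.surjective_of_forall_sum_mul_eq_zero {K M ι : Type*} [Field K]
    [AddCommGroup M] [Module K M] [Fintype ι] {f : M →ₗ[K] ι → K}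
    (h : ∀ c : ι → K, (∀ m, ∑ i, c i * f m i = 0) → c = 0) : Function.Surjective f := by
  rw [← LinearMap.dualMap_injective_iff, injective_iff_map_eq_zero]
  intro φ hφ
  have hc := congrFun <| h (fun i => φ fun j => if i = j then 1 else 0) fun m => by
    have hφm := LinearMap.congr_fun hφ m
    rw [dualMap_apply, pi_apply_eq_sum_univ φ (f m), zero_apply] at hφm
    refine (Finset.sum_congr rfl fun i _ => ?_).trans hφm
    rw [smul_eq_mul, mul_comm]
  refine LinearMap.ext fun x => ?_
  simp [pi_apply_eq_sum_univ φ x, hc]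

section LeastSpace

open MvPolynomial Finset
open scoped Nat

variable {n : ℕ} (V : Finset (Fin n → ℝ))

theorem lin_eq_sum_smul_X (v : Fin n → ℝ) : lin n v = ∑ i, (v i : ℂ) • X i := by
  simp only [lin, smul_eq_C_mul]

theorem map_conj_lin (v : Fin n → ℝ) : map (starRingEnd ℂ) (lin n v) = lin n v := by
  simp [lin]

theorem expPart_isHomogeneous (c : (Fin n → ℝ) → ℂ) (j : ℕ) :
    (expPart n V c j).IsHomogeneous j := by
  have hlin (v : Fin n → ℝ) : lin n v ^ j ∈ homogeneousSubmodule (Fin n) ℂ j := by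
    rw [mem_homogeneousSubmodule, lin]
    simpa using (IsHomogeneous.sum _ _ 1 fun i _ => isHomogeneous_C_mul_X (v i : ℂ) i).pow j
  rw [← mem_homogeneousSubmodule]
  exact Submodule.smul_mem _ _ (Submodule.sum_mem _ fun v _ => Submodule.smul_mem _ _ (hlin v))

theorem expPart_add (c c' : (Fin n → ℝ) → ℂ) (j : ℕ) :
    expPart n V (c + c') j = expPart n V c j + expPart n V c' j := by
  simp [expPart, add_smul, sum_add_distrib]

theorem expPart_smul (a : ℂ) (c : (Fin n → ℝ) → ℂ) (j : ℕ) :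
    expPart n V (a • c) j = a • expPart n V c j := by
  simp [expPart, smul_sum, mul_smul, smul_comm a]

theorem expPart_conj (c : (Fin n → ℝ) → ℂ) (j : ℕ) :
    expPart n V (fun v => starRingEnd ℂ (c v)) j = map (starRingEnd ℂ) (expPart n V c j) := by
  simp [expPart, smul_eq_C_mul, map_conj_lin]

theorem apolar_expPart {p : MvPolynomial (Fin n) ℂ} {j : ℕ} (hp : p.IsHomogeneous j)
    (c : (Fin n → ℝ) → ℂ) :
    apolar p (expPart n V c j) = ∑ v ∈ V, c v * eval (fun i => (v i : ℂ)) p := by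
  simp only [expPart, map_smul, map_sum, lin_eq_sum_smul_X, apolar_sum_smul_X_pow hp, smul_eq_mul,
    mul_sum]
  refine sum_congr rfl fun v _ => ?_
  have : (j ! : ℂ) ≠ 0 := Nat.cast_ne_zero.mpr (Nat.factorial_ne_zero j)
  field_simp

theorem sum_mul_eval_eq_sum_apolar (p : MvPolynomial (Fin n) ℂ) (c : (Fin n → ℝ) → ℂ) :
    ∑ v ∈ V, c v * eval (fun i => (v i : ℂ)) p =
      ∑ j ∈ range (p.totalDegree + 1), apolar (homogeneousComponent j p) (expPart n V c j) := by
  simp_rw [apolar_expPart V (homogeneousComponent_isHomogeneous _ _), sum_comm (s := range _),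
    ← mul_sum, ← map_sum, sum_homogeneousComponent]

theorem eq_zero_of_forall_expPart_eq_zero {c : (Fin n → ℝ) → ℂ} (h : ∀ j, expPart n V c j = 0)
    {v : Fin n → ℝ} (hv : v ∈ V) : c v = 0 := by
  -- Every `∑ᵥ cᵥ p(v)` vanishes; test against a `p` vanishing on `V \ {v}` but not at `v`.
  let toComplex : (Fin n → ℝ) → Fin n → ℂ := fun w i => (w i : ℂ)
  obtain ⟨p, hpv, hpV⟩ := exists_eval_ne_zero_forall_eval_eq_zero ((V.erase v).image toComplex)
    (x := toComplex v) fun hmem => by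
      obtain ⟨w, hw, hwv⟩ := mem_image.mp hmem
      exact (mem_erase.mp hw).1 (Complex.ofReal_injective.comp_left hwv)
  have hsum := sum_mul_eval_eq_sum_apolar V p c
  simp only [h, map_zero, sum_const_zero] at hsum
  rw [sum_eq_single_of_mem v hv fun w hw hwv => by
    rw [hpV _ (mem_image_of_mem _ (mem_erase.mpr ⟨hwv, hw⟩)), mul_zero]] at hsum
  exact (mul_eq_zero.mp hsum).resolve_right hpv

theorem expPart_mem_leastSpace {c : (Fin n → ℝ) → ℂ} {d : ℕ}
    (hlow : ∀ j < d, expPart n V c j = 0) : expPart n V c d ∈ leastSpace n V := by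
  by_cases h0 : expPart n V c d = 0
  · rw [h0]
    exact zero_mem _
  · exact Submodule.subset_span ⟨c, d, rfl, h0, hlow⟩

theorem exists_expPart_eq_homogeneousComponent {p : MvPolynomial (Fin n) ℂ}
    (hp : p ∈ leastSpace n V) (d : ℕ) :
    ∃ c, (∀ j < d, expPart n V c j = 0) ∧ homogeneousComponent d p = expPart n V c d := by
  have hzero (j : ℕ) : expPart n V 0 j = 0 := by simp [expPart]
  induction hp using Submodule.span_induction with
  | mem g hg =>
    obtain ⟨c, j₀, rfl, -, hlow⟩ := hg
    rw [homogeneousComponent_of_mem ((mem_homogeneousSubmodule _ _).mpr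
      (expPart_isHomogeneous V c j₀))]
    split_ifs with hd
    · subst hd
      exact ⟨c, hlow, rfl⟩
    · exact ⟨0, fun j _ => hzero j, (hzero d).symm⟩
  | zero => exact ⟨0, fun j _ => hzero j, by rw [map_zero, hzero]⟩
  | add p q _ _ hp hq =>
    obtain ⟨c, hlow, hc⟩ := hp
    obtain ⟨c', hlow', hc'⟩ := hq
    refine ⟨c + c', fun j hj => ?_, ?_⟩
    · rw [expPart_add, hlow j hj, hlow' j hj, add_zero]
    · rw [map_add, hc, hc', expPart_add]
  | smul a p _ hp =>
    obtain ⟨c, hlow, hc⟩ := hp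
    refine ⟨a • c, fun j hj => ?_, ?_⟩
    · rw [expPart_smul, hlow j hj, smul_zero]
    · rw [map_smul, hc, expPart_smul]

theorem eq_zero_of_mem_leastSpace_of_eval_eq_zero {p : MvPolynomial (Fin n) ℂ}
    (hp : p ∈ leastSpace n V) (hV : ∀ v ∈ V, eval (fun i => (v i : ℂ)) p = 0) : p = 0 := by
  by_contra hne
  set d := p.totalDegree
  obtain ⟨c, hlow, hc⟩ := exists_expPart_eq_homogeneousComponent V hp d
  have hlower : ∀ j ∈ range (d + 1), j ≠ d → apolar (homogeneousComponent j p)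
      (expPart n V (fun v => starRingEnd ℂ (c v)) j) = 0 := fun j hj hjd => by
    rw [expPart_conj, hlow j (lt_of_le_of_ne (mem_range_succ_iff.mp hj) hjd), map_zero, map_zero]
  have hsum := sum_mul_eval_eq_sum_apolar V p fun v => starRingEnd ℂ (c v)
  rw [sum_eq_zero fun v hv => by rw [hV v hv, mul_zero],
    sum_eq_single_of_mem d (self_mem_range_succ d) hlower, expPart_conj, ← hc] at hsum
  exact apolar_self_map_conj_ne_zero (homogeneousComponent_totalDegree_ne_zero hne) hsum.symm

theorem exists_mem_leastSpace_sum_mul_eval_ne_zero {c : (Fin n → ℝ) → ℂ}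
    (hc : ∃ v ∈ V, c v ≠ 0) :
    ∃ p ∈ leastSpace n V, ∑ v ∈ V, c v * eval (fun i => (v i : ℂ)) p ≠ 0 := by
  have hex : ∃ j, expPart n V c j ≠ 0 := by
    by_contra! h
    obtain ⟨v, hv, hcv⟩ := hc
    exact hcv (eq_zero_of_forall_expPart_eq_zero V h hv)
  set q := expPart n V (fun v => starRingEnd ℂ (c v)) (Nat.find hex)
  have hq : q = map (starRingEnd ℂ) (expPart n V c (Nat.find hex)) := expPart_conj V c _
  refine ⟨q, expPart_mem_leastSpace V fun j hj => ?_, ?_⟩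
  · rw [expPart_conj, not_ne_iff.mp (Nat.find_min hex hj), map_zero]
  · have hE : expPart n V c (Nat.find hex) = map (starRingEnd ℂ) q := by
      simpa only [Complex.conj_conj] using expPart_conj V (fun v => starRingEnd ℂ (c v)) _
    have hq0 : q ≠ 0 := by
      simpa [hq] using (map_injective _ (RingHom.injective (starRingEnd ℂ))).ne (Nat.find_spec hex)
    rw [← apolar_expPart V (expPart_isHomogeneous V _ _), hE]
    exact apolar_self_map_conj_ne_zero hq0

end LeastSpace

open MvPolynomial in
def leastRestrict (n : ℕ) (V : Finset (Fin n → ℝ)) : leastSpace n V →ₗ[ℂ] ({v // v ∈ V} → ℂ) :=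
  LinearMap.pi fun v => (aeval fun i => (v.1 i : ℂ)).toLinearMap ∘ₗ (leastSpace n V).subtype

theorem leastRestrict_injective (n : ℕ) (V : Finset (Fin n → ℝ)) :
    Function.Injective (leastRestrict n V) :=
  (injective_iff_map_eq_zero _).mpr fun p hp => Subtype.ext <|
    eq_zero_of_mem_leastSpace_of_eval_eq_zero V p.2 fun v hv => congrFun hp ⟨v, hv⟩

theorem leastRestrict_surjective (n : ℕ) (V : Finset (Fin n → ℝ)) :
    Function.Surjective (leastRestrict n V) := by
  refine LinearMap.surjective_of_forall_sum_mul_eq_zero fun c hc => ?_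
  by_contra! hne
  obtain ⟨⟨v, hv⟩, hcv⟩ := Function.ne_iff.mp hne
  obtain ⟨p, hp, hsum⟩ := exists_mem_leastSpace_sum_mul_eval_ne_zero V
    (c := fun w => if h : w ∈ V then c ⟨w, h⟩ else 0) ⟨v, hv, by simpa [hv] using hcv⟩
  rw [← Finset.sum_coe_sort] at hsum
  simpa using hsum (by simpa [leastRestrict] using hc ⟨p, hp⟩)

theorem least_map_bijective (n : ℕ) (V : Finset (Fin n → ℝ)) :
    Function.Bijective (fun (p : leastSpace n V) (v : {v // v ∈ V}) =>
      MvPolynomial.eval (fun i => ((v.1 i : ℝ) : ℂ)) (p : MvPolynomial (Fin n) ℂ)) ∧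
    Module.finrank ℂ (leastSpace n V) = V.card := by
  have hbij : Function.Bijective (leastRestrict n V) :=
    ⟨leastRestrict_injective n V, leastRestrict_surjective n V⟩
  exact ⟨hbij, (LinearEquiv.ofBijective _ hbij).finrank_eq.trans (by simp)⟩
end
end

section
/- Let 𝕀' be a semi-external subset of 𝕀(X). Then the polynomials Q_I = p_{X(I)}, I ∈ 𝕀', form a basis for P_+(X,𝕀') := span{p_Y : Y ⊂ X, Y ∩ I = ∅ for some I ∈ 𝕀'}. In particular dim P_+(X,𝕀') = #𝕀' and dim(P_+(X,𝕀') ∩ Π_j^0) = #{I ∈ 𝕀' : val(I) = j}. -/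
open MvPolynomial

attribute [local instance] Classical.propDecidable

noncomputable section

/-!
Independence is proved by induction on the number of nonzero vectors. Let `x i₀` be the first
nonzero vector and `P` a linear map with kernel `ℝ x i₀`; substituting `lin v ↦ lin (P v)`
kills every `Q_I` with `i₀ ∉ I`, since `lin (x i₀)` divides it, and turns `Q_I` with `i₀ ∈ I`
into `Q_{I \ i₀}` for the vectors `P ∘ x`, while each `Q_I` with `i₀ ∉ I` is `lin (x i₀)` times
the `Q_I` of `x` with `x i₀` replaced by `0`.

Spanning: let `G` be the greedy basis (in the order of the indices) of the complement of `Y`.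
Then `X(G) ⊆ Y`, and if some `i₀ ∈ Y` is missing, `x i₀` is a combination of earlier elements
`b` of `G`, so `p_Y` is a combination of the `p_{Y - i₀ + b}`, whose complements span at least
as much and whose index sums are smaller. Semi-externality puts every `G` reached in `𝕀'`.
-/

section LinearAlgebra

open Submodule

theorem LinearIndepOn.union_of_map_eq_zero {ι R M M' : Type*} [Ring R] [AddCommGroup M]
    [Module R M] [AddCommGroup M'] [Module R M'] {f : M →ₗ[R] M'} {v : ι → M} {s t : Set ι}
    (hs : LinearIndepOn R (f ∘ v) s) (ht : LinearIndepOn R v t) (hf : ∀ i ∈ t, f (v i) = 0) :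
    LinearIndepOn R v (s ∪ t) := by
  refine (hs.of_comp f).union ht ?_
  have hker : span R (v '' t) ≤ LinearMap.ker f := span_le.2 <| by
    rintro _ ⟨i, hi, rfl⟩
    exact hf i hi
  rw [Set.image_eq_range v s]
  exact (range_ker_disjoint (v := fun i : s => v i) hs).mono_right hker

variable {ι K V V' : Type*} [DivisionRing K] [AddCommGroup V] [Module K V]
  [AddCommGroup V'] [Module K V']

theorem exists_ker_eq_span_singleton (w : V) : ∃ P : V →ₗ[K] V, LinearMap.ker P = K ∙ w := by
  obtain ⟨q, hq⟩ := (K ∙ w).exists_isCompl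
  exact ⟨q.projection (K ∙ w) hq.symm, ker_projection hq.symm⟩

theorem mem_span_insert_iff_of_ker_eq {P : V →ₗ[K] V'} {w : V} (hP : LinearMap.ker P = K ∙ w)
    (S : Set V) (v : V) : v ∈ span K (insert w S) ↔ P v ∈ span K (P '' S) := by
  rw [span_insert, sup_comm, ← hP, ← comap_map_eq, mem_comap, map_span]

theorem LinearIndepOn.comp_diff_singleton_of_ker_eq {x : ι → V} {s : Set ι} {a : ι}
    (hs : LinearIndepOn K x s) (ha : a ∈ s) {P : V →ₗ[K] V'}
    (hP : LinearMap.ker P = K ∙ x a) : LinearIndepOn K (P ∘ x) (s \ {a}) := by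
  rw [← Set.insert_eq_of_mem ha, ← Set.insert_sdiff_singleton,
    linearIndepOn_insert (fun h => h.2 rfl)] at hs
  refine hs.1.map ?_
  have hxa : x a ≠ 0 := fun h => hs.2 (h ▸ zero_mem _)
  rw [hP, ← Set.image_eq_range, disjoint_span_singleton' hxa]
  exact hs.2

theorem mem_span_insert_of_sum_eq [DecidableEq ι] {x : ι → V} {T : Finset ι} {α : ι → K} {w : V}
    (hw : ∑ i ∈ T, α i • x i = w) {b : ι} (hb : b ∈ T) (hαb : α b ≠ 0) :
    x b ∈ span K (insert w (x '' ↑(T.erase b))) := by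
  have hxb : α b • x b = w - ∑ i ∈ T.erase b, α i • x i := by
    rw [← hw, ← Finset.add_sum_erase T _ hb, add_sub_cancel_right]
  rw [← smul_mem_iff _ hαb, hxb]
  refine sub_mem (subset_span (Set.mem_insert w _)) (span_mono (Set.subset_insert w _) ?_)
  exact sum_mem fun i hi => smul_mem _ _ (subset_span ⟨i, hi, rfl⟩)

theorem span_compl_le_span_compl_insert_erase [DecidableEq ι] {x : ι → V} {Y T : Finset ι}
    {α : ι → K} {i₀ b : ι} (hi₀ : i₀ ∈ Y) (hTY : Disjoint T Y) (hα : ∑ i ∈ T, α i • x i = x i₀)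
    (hb : b ∈ T) (hαb : α b ≠ 0) :
    span K (x '' (↑Y)ᶜ) ≤ span K (x '' (↑(insert b (Y.erase i₀)))ᶜ) := by
  have hbi₀ : b ≠ i₀ := fun h => Finset.disjoint_left.1 hTY hb (h ▸ hi₀)
  have hsub : insert (x i₀) (x '' ↑(T.erase b)) ⊆ x '' (↑(insert b (Y.erase i₀)))ᶜ := by
    rintro _ (rfl | ⟨i, hi, rfl⟩)
    · exact ⟨i₀, by simp [hbi₀.symm], rfl⟩
    · obtain ⟨hib, hiT⟩ := Finset.mem_erase.1 hi
      exact ⟨i, by simp [hib, Finset.disjoint_left.1 hTY hiT], rfl⟩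
  refine span_le.2 ?_
  rintro _ ⟨i, hi, rfl⟩
  obtain rfl | hib := eq_or_ne i b
  · exact span_mono hsub (mem_span_insert_of_sum_eq hα hb hαb)
  · exact subset_span ⟨i, by simp [hib, show i ∉ Y from hi], rfl⟩

end LinearAlgebra

section LinearForms

variable {n : ℕ}

theorem lin_zero : lin n 0 = 0 := by
  simp [lin]

theorem lin_ne_zero {v : Fin n → ℝ} (hv : v ≠ 0) : lin n v ≠ 0 := by
  obtain ⟨i, hi⟩ := Function.ne_iff.1 hv
  intro h
  have := congrArg (coeff (Finsupp.single i 1)) h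
  exact hi (by simpa [lin, coeff_sum, coeff_C_mul, coeff_X, Finsupp.single_left_inj] using this)

def linearSubst (P : (Fin n → ℝ) →ₗ[ℝ] (Fin n → ℝ)) :
    MvPolynomial (Fin n) ℂ →ₐ[ℂ] MvPolynomial (Fin n) ℂ :=
  aeval fun i => lin n (P (Pi.single i 1))

theorem lin_sum_smul {ι : Type*} (T : Finset ι) (α : ι → ℝ) (v : ι → Fin n → ℝ) :
    lin n (∑ b ∈ T, α b • v b) = ∑ b ∈ T, (α b : ℂ) • lin n (v b) := by
  simp only [lin, Finset.sum_apply, Pi.smul_apply, smul_eq_mul, Complex.ofReal_sum,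
    Complex.ofReal_mul, map_sum, C_mul, Finset.sum_mul, mul_assoc, Finset.smul_sum, smul_eq_C_mul]
  rw [Finset.sum_comm]

theorem linearSubst_lin (P : (Fin n → ℝ) →ₗ[ℝ] (Fin n → ℝ)) (v : Fin n → ℝ) :
    linearSubst P (lin n v) = lin n (P v) := by
  rw [LinearMap.pi_apply_eq_sum_univ P v, lin_sum_smul, lin, map_sum]
  refine Finset.sum_congr rfl fun i _ => ?_
  have hi : (fun j => if i = j then (1 : ℝ) else 0) = Pi.single i 1 := by
    ext j
    simp [Pi.single_apply, eq_comm]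
  rw [map_mul, linearSubst, aeval_C, aeval_X, algebraMap_eq, smul_eq_C_mul, hi]

end LinearForms

section Independence

open Submodule

variable {n N : ℕ}

theorem mem_XofY {x : Fin N → Fin n → ℝ} {Y : Finset (Fin N)} {i : Fin N} :
    i ∈ XofY x Y ↔ i ∉ Y ∧ x i ∉ span ℝ (x '' {j | j ∈ Y ∧ j < i}) := by
  simp [XofY]

theorem QB_ne_zero (x : Fin N → Fin n → ℝ) (Y : Finset (Fin N)) : QB x Y ≠ 0 :=
  Finset.prod_ne_zero_iff.2 fun _ hi =>
    lin_ne_zero fun h => (mem_XofY.1 hi).2 (h ▸ zero_mem _)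

section FirstNonzero

variable {x : Fin N → Fin n → ℝ} {i₀ : Fin N} {I : Finset (Fin N)}

theorem XofY_eq_insert_of_notMem (hzero : ∀ j < i₀, x j = 0) (hi₀ : x i₀ ≠ 0) (hI : i₀ ∉ I) :
    XofY x I = insert i₀ (XofY (Function.update x i₀ 0) I) := by
  ext i
  rcases eq_or_ne i i₀ with rfl | hi
  · have hbot : span ℝ (x '' {j | j ∈ I ∧ j < i}) = ⊥ :=
      span_eq_bot.2 <| by rintro _ ⟨j, hj, rfl⟩; exact hzero j hj.2
    simp [mem_XofY, hI, hbot, hi₀]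
  · have himg : Function.update x i₀ 0 '' {j | j ∈ I ∧ j < i} = x '' {j | j ∈ I ∧ j < i} :=
      Set.image_congr fun j hj => Function.update_of_ne (ne_of_mem_of_not_mem hj.1 hI) _ _
    simp [mem_XofY, hi, himg]

theorem QB_eq_lin_mul_of_notMem (hzero : ∀ j < i₀, x j = 0) (hi₀ : x i₀ ≠ 0) (hI : i₀ ∉ I) :
    QB x I = lin n (x i₀) * QB (Function.update x i₀ 0) I := by
  have hi₀X : i₀ ∉ XofY (Function.update x i₀ 0) I := fun h => (mem_XofY.1 h).2 (by simp)
  rw [QB, XofY_eq_insert_of_notMem hzero hi₀ hI, pProd, Finset.prod_insert hi₀X, QB, pProd]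
  congr 1
  refine Finset.prod_congr rfl fun _ hi => ?_
  rw [Function.update_of_ne (ne_of_mem_of_not_mem hi hi₀X)]

theorem XofY_eq_of_mem (hzero : ∀ j < i₀, x j = 0) {P : (Fin n → ℝ) →ₗ[ℝ] (Fin n → ℝ)}
    (hP : LinearMap.ker P = ℝ ∙ x i₀) (hI : i₀ ∈ I) :
    XofY x I = XofY (P ∘ x) (I.erase i₀) := by
  ext i
  rw [mem_XofY, mem_XofY]
  rcases lt_trichotomy i i₀ with hlt | rfl | hgt
  · simp [hzero i hlt]
  · have : P (x i) = 0 := LinearMap.mem_ker.1 (hP ▸ mem_span_singleton_self _)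
    simp [hI, this]
  · have hset : {j | j ∈ I ∧ j < i} = insert i₀ {j | j ∈ I.erase i₀ ∧ j < i} := by
      ext j
      by_cases hj : j = i₀ <;> simp [hj, hI, hgt]
    rw [hset, Set.image_insert_eq, mem_span_insert_iff_of_ker_eq hP, Set.image_comp]
    simp [hgt.ne']

theorem linearSubst_QB_of_mem (hzero : ∀ j < i₀, x j = 0)
    {P : (Fin n → ℝ) →ₗ[ℝ] (Fin n → ℝ)} (hP : LinearMap.ker P = ℝ ∙ x i₀) (hI : i₀ ∈ I) :
    linearSubst P (QB x I) = QB (P ∘ x) (I.erase i₀) := by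
  rw [QB, XofY_eq_of_mem hzero hP hI, QB, pProd, pProd, map_prod]
  exact Finset.prod_congr rfl fun i _ => linearSubst_lin P (x i)

theorem linearSubst_QB_of_notMem (hzero : ∀ j < i₀, x j = 0) (hi₀ : x i₀ ≠ 0)
    {P : (Fin n → ℝ) →ₗ[ℝ] (Fin n → ℝ)} (hP : P (x i₀) = 0) (hI : i₀ ∉ I) :
    linearSubst P (QB x I) = 0 := by
  rw [QB_eq_lin_mul_of_notMem hzero hi₀ hI, map_mul, linearSubst_lin, hP, lin_zero, zero_mul]

theorem linearIndepOn_linearSubst_QB_of_mem (hzero : ∀ j < i₀, x j = 0)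
    {P : (Fin n → ℝ) →ₗ[ℝ] (Fin n → ℝ)} (hP : LinearMap.ker P = ℝ ∙ x i₀)
    (hPx : LinearIndepOn ℂ (QB (P ∘ x)) {J | IsIndepSet (P ∘ x) J}) :
    LinearIndepOn ℂ ((linearSubst P).toLinearMap ∘ QB x) {I | IsIndepSet x I ∧ i₀ ∈ I} := by
  have himg : (·.erase i₀) '' {I | IsIndepSet x I ∧ i₀ ∈ I} ⊆ {J | IsIndepSet (P ∘ x) J} := by
    rintro _ ⟨I, ⟨hI, hi⟩, rfl⟩
    have := LinearIndepOn.comp_diff_singleton_of_ker_eq hI hi hP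
    rwa [← Finset.coe_singleton, ← Finset.coe_sdiff, ← Finset.erase_eq] at this
  have hinj : {I | IsIndepSet x I ∧ i₀ ∈ I}.InjOn (·.erase i₀) :=
    (Finset.erase_injOn' i₀).mono fun _ hI => hI.2
  exact ((hPx.mono himg).comp_of_image hinj).congr fun I hI =>
    (linearSubst_QB_of_mem hzero hP hI.2).symm

theorem linearIndepOn_QB_of_notMem (hzero : ∀ j < i₀, x j = 0) (hi₀ : x i₀ ≠ 0)
    (hx' : LinearIndepOn ℂ (QB (Function.update x i₀ 0))
      {J | IsIndepSet (Function.update x i₀ 0) J}) :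
    LinearIndepOn ℂ (QB x) {I | IsIndepSet x I ∧ i₀ ∉ I} := by
  have hsub : {I | IsIndepSet x I ∧ i₀ ∉ I} ⊆ {J | IsIndepSet (Function.update x i₀ 0) J} :=
    fun I hI => LinearIndepOn.congr hI.1 fun i hi =>
      (Function.update_of_ne (ne_of_mem_of_not_mem hi hI.2) _ _).symm
  have hker : LinearMap.ker (LinearMap.mulLeft ℂ (lin n (x i₀))) = ⊥ :=
    LinearMap.ker_eq_bot.2 (mul_right_injective₀ (lin_ne_zero hi₀))
  exact LinearIndepOn.congr (v := LinearMap.mulLeft ℂ (lin n (x i₀)) ∘ _)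
    ((hx'.mono hsub).map' _ hker) fun I hI => (QB_eq_lin_mul_of_notMem hzero hi₀ hI.2).symm

end FirstNonzero

theorem Finset.filter_ne_zero_ssubset {ι M : Type*} [Fintype ι] [Zero M] {x y : ι → M} {i₀ : ι}
    [DecidablePred (x · ≠ 0)] [DecidablePred (y · ≠ 0)] (hxy : ∀ i, x i = 0 → y i = 0)
    (hx : x i₀ ≠ 0) (hy : y i₀ = 0) :
    Finset.univ.filter (y · ≠ 0) ⊂ Finset.univ.filter (x · ≠ 0) :=
  (Finset.ssubset_iff_of_subset fun i hi => by simpa using mt (hxy i) (by simpa using hi)).2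
    ⟨i₀, by simpa using hx, by simpa using hy⟩

theorem linearIndepOn_QB (x : Fin N → Fin n → ℝ) :
    LinearIndepOn ℂ (QB x) {I | IsIndepSet x I} := by
  induction hS : Finset.univ.filter (x · ≠ 0) using Finset.strongInduction generalizing x with
  | H S ih =>
  have hmemS : ∀ i, i ∈ S ↔ x i ≠ 0 := fun i => by simp [← hS]
  obtain rfl | hSne := S.eq_empty_or_nonempty
  · have hsub : {I | IsIndepSet x I} ⊆ {∅} := fun I hI =>
      Finset.eq_empty_of_forall_notMem fun i hi =>
        Finset.notMem_empty i ((hmemS i).2 (LinearIndepOn.ne_zero hI hi))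
    exact ((linearIndepOn_singleton_iff ℂ).2 (QB_ne_zero x ∅)).mono hsub
  set i₀ := S.min' hSne
  have hi₀ : x i₀ ≠ 0 := (hmemS i₀).1 (S.min'_mem hSne)
  have hzero : ∀ j < i₀, x j = 0 := fun j hj => by
    by_contra h
    exact not_lt_of_ge (S.min'_le j ((hmemS j).2 h)) hj
  obtain ⟨P, hP⟩ := exists_ker_eq_span_singleton (K := ℝ) (x i₀)
  have hPx : P (x i₀) = 0 := LinearMap.mem_ker.1 (hP ▸ mem_span_singleton_self _)
  have ih' : ∀ y : Fin N → Fin n → ℝ, (∀ i, x i = 0 → y i = 0) → y i₀ = 0 →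
      LinearIndepOn ℂ (QB y) {J | IsIndepSet y J} := fun y hxy hy =>
    ih _ (hS ▸ Finset.filter_ne_zero_ssubset hxy hi₀ hy) y rfl
  have hA := linearIndepOn_linearSubst_QB_of_mem hzero hP <|
    ih' (P ∘ x) (fun i hi => by simp [hi]) hPx
  have hB := linearIndepOn_QB_of_notMem hzero hi₀ <|
    ih' _ (fun i hi => by simp [Function.update_apply, hi]) (by simp)
  refine (hA.union_of_map_eq_zero hB fun I hI =>
    linearSubst_QB_of_notMem hzero hi₀ hPx hI.2).mono fun I hI => ?_
  by_cases h : i₀ ∈ I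
  exacts [Or.inl ⟨hI, h⟩, Or.inr ⟨hI, h⟩]

end Independence

section Greedy

open Submodule

variable {ι K V : Type*} [LinearOrder ι] [DivisionRing K] [AddCommGroup V] [Module K V]

variable (K) in
def greedyBasis (x : ι → V) (Z : Finset ι) : Finset ι :=
  Z.filter fun i => x i ∉ span K (x '' {j | j ∈ Z ∧ j < i})

variable {x : ι → V} {Z : Finset ι}

theorem greedyBasis_subset : greedyBasis K x Z ⊆ Z :=
  Finset.filter_subset _ _

theorem span_lt_le_span_greedyBasis_lt [WellFoundedLT ι] (i : ι) :
    span K (x '' {j | j ∈ Z ∧ j < i}) ≤ span K (x '' {j | j ∈ greedyBasis K x Z ∧ j < i}) := by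
  induction i using WellFoundedLT.induction with
  | _ i ih =>
  refine span_le.2 ?_
  rintro _ ⟨j, ⟨hjZ, hji⟩, rfl⟩
  by_cases hj : j ∈ greedyBasis K x Z
  · exact subset_span ⟨j, ⟨hj, hji⟩, rfl⟩
  have hspan : x j ∈ span K (x '' {k | k ∈ Z ∧ k < j}) := by
    simpa [greedyBasis, hjZ] using hj
  exact span_mono (Set.image_mono (Set.ofPred_subset_ofPred.2 fun k hk => ⟨hk.1, hk.2.trans hji⟩))
    (ih j hji hspan)

theorem span_le_span_greedyBasis [WellFoundedLT ι] :
    span K (x '' ↑Z) ≤ span K (x '' ↑(greedyBasis K x Z)) := by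
  refine span_le.2 ?_
  rintro _ ⟨i, hiZ, rfl⟩
  by_cases hi : i ∈ greedyBasis K x Z
  · exact subset_span ⟨i, hi, rfl⟩
  have hspan : x i ∈ span K (x '' {k | k ∈ Z ∧ k < i}) := by
    simpa [greedyBasis, Finset.mem_coe.1 hiZ] using hi
  exact span_mono (Set.image_mono (Set.ofPred_subset_ofPred.2 fun k hk => hk.1))
    (span_lt_le_span_greedyBasis_lt i hspan)

theorem linearIndepOn_of_notMem_span_lt (S : Finset ι)
    (h : ∀ i ∈ S, x i ∉ span K (x '' {j | j ∈ S ∧ j < i})) : LinearIndepOn K x ↑S := by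
  induction S using Finset.induction_on_max with
  | empty => exact Finset.coe_empty ▸ linearIndepOn_empty K x
  | insert a S hlt ih =>
    have haS : a ∉ S := fun ha => lt_irrefl a (hlt a ha)
    have hS : {j | j ∈ insert a S ∧ j < a} = ↑S := by
      ext j
      simp only [Finset.mem_insert, Set.mem_ofPred_eq, Finset.mem_coe]
      exact ⟨fun ⟨hj, hja⟩ => hj.resolve_left hja.ne, fun hj => ⟨Or.inr hj, hlt j hj⟩⟩
    rw [Finset.coe_insert, linearIndepOn_insert haS]
    refine ⟨ih fun i hi => ?_, hS ▸ h a (Finset.mem_insert_self a S)⟩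
    have hSi : {j | j ∈ insert a S ∧ j < i} = {j | j ∈ S ∧ j < i} := by
      ext j
      simp only [Finset.mem_insert, Set.mem_ofPred_eq]
      exact ⟨fun ⟨hj, hji⟩ => ⟨hj.resolve_left fun hja => (hlt i hi).not_gt (hja ▸ hji), hji⟩,
        fun ⟨hj, hji⟩ => ⟨Or.inr hj, hji⟩⟩
    exact hSi ▸ h i (Finset.mem_insert_of_mem hi)

theorem linearIndepOn_greedyBasis : LinearIndepOn K x ↑(greedyBasis K x Z) :=
  linearIndepOn_of_notMem_span_lt _ fun _ hi hspan =>
    (Finset.mem_filter.1 hi).2 (span_mono (Set.image_mono (Set.ofPred_subset_ofPred.2 fun _ hj =>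
      ⟨greedyBasis_subset hj.1, hj.2⟩)) hspan)

end Greedy

section Spanning

open Submodule

variable {n N : ℕ}

theorem XofY_greedyBasis_compl {x : Fin N → Fin n → ℝ} {Y : Finset (Fin N)}
    (h : ∀ i ∈ Y, x i ∉ span ℝ (x '' {j | j ∈ greedyBasis ℝ x Yᶜ ∧ j < i})) :
    XofY x (greedyBasis ℝ x Yᶜ) = Y := by
  ext i
  rw [mem_XofY]
  refine ⟨fun ⟨hiG, hspan⟩ => ?_, fun hiY =>
    ⟨fun hiG => Finset.mem_compl.1 (greedyBasis_subset hiG) hiY, h i hiY⟩⟩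
  by_contra hiY
  have hmem : x i ∈ span ℝ (x '' {j | j ∈ Yᶜ ∧ j < i}) := by
    simpa [greedyBasis, hiY] using hiG
  exact hspan (span_lt_le_span_greedyBasis_lt i hmem)

theorem pProd_mem_span_QB (x : Fin N → Fin n → ℝ) (Y : Finset (Fin N)) :
    pProd x Y ∈
      span ℂ (QB x '' {J | IsIndepSet x J ∧ span ℝ (x '' (↑Y)ᶜ) ≤ span ℝ (x '' ↑J)}) := by
  induction hm : ∑ i ∈ Y, (i : ℕ) using Nat.strong_induction_on generalizing Y with
  | _ m ih =>
  set G := greedyBasis ℝ x Yᶜ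
  by_cases hcase : ∀ i ∈ Y, x i ∉ span ℝ (x '' {j | j ∈ G ∧ j < i})
  · refine subset_span ⟨G, ⟨linearIndepOn_greedyBasis, ?_⟩, by
      rw [QB, XofY_greedyBasis_compl hcase]⟩
    rw [← Finset.coe_compl]
    exact span_le_span_greedyBasis
  push Not at hcase
  obtain ⟨i₀, hi₀Y, hi₀⟩ := hcase
  set T := G.filter (· < i₀)
  rw [← Finset.coe_filter, mem_span_image_finset_iff_exists_fun'] at hi₀
  obtain ⟨α, hα⟩ := hi₀
  have hTY : Disjoint T Y := Finset.disjoint_left.2 fun i hi =>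
    Finset.mem_compl.1 (greedyBasis_subset (Finset.filter_subset _ _ hi))
  have hTY' : ∀ b ∈ T, b ∉ Y.erase i₀ := fun b hb h =>
    Finset.disjoint_left.1 hTY hb (Finset.mem_of_mem_erase h)
  have hexp : pProd x Y = ∑ b ∈ T, (α b : ℂ) • pProd x (insert b (Y.erase i₀)) := by
    rw [pProd, ← Finset.mul_prod_erase Y _ hi₀Y, ← hα, lin_sum_smul, Finset.sum_mul]
    refine Finset.sum_congr rfl fun b hb => ?_
    rw [pProd, Finset.prod_insert (hTY' b hb), smul_mul_assoc]
  rw [hexp]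
  refine sum_mem fun b hb => ?_
  obtain hαb | hαb := eq_or_ne (α b) 0
  · simp [hαb]
  have hlt : ∑ i ∈ insert b (Y.erase i₀), (i : ℕ) < m := by
    have hbi₀ : (b : ℕ) < i₀ := (Finset.mem_filter.1 hb).2
    rw [Finset.sum_insert (hTY' b hb), ← hm, ← Finset.add_sum_erase Y _ hi₀Y]
    omega
  have hmono := span_compl_le_span_compl_insert_erase hi₀Y hTY hα hb hαb
  exact smul_mem _ _ (span_mono (Set.image_mono (Set.ofPred_subset_ofPred.2 fun J hJ =>
    ⟨hJ.1, hmono.trans hJ.2⟩)) (ih _ hlt _ rfl))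

end Spanning

section Basis

open Submodule

theorem LinearIndepOn.finrank_span_image_eq_ncard {ι K V : Type*} [DivisionRing K]
    [AddCommGroup V] [Module K V] {v : ι → V} {s : Set ι} [Finite s]
    (hs : LinearIndepOn K v s) : Module.finrank K (span K (v '' s)) = s.ncard := by
  have := Fintype.ofFinite s
  rw [Set.image_eq_range, finrank_span_eq_card hs, ← Nat.card_eq_fintype_card,
    Nat.card_coe_set_eq]

theorem span_image_inf_homogeneousSubmodule {σ R ι : Type*} [CommSemiring R]
    {f : ι → MvPolynomial σ R} {d : ι → ℕ} (hf : ∀ i, f i ∈ homogeneousSubmodule σ R (d i))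
    (s : Set ι) (j : ℕ) :
    span R (f '' s) ⊓ homogeneousSubmodule σ R j = span R (f '' (s ∩ {i | d i = j})) := by
  refine le_antisymm (fun p hp => ?_)
    (le_inf (span_mono (Set.image_mono Set.inter_subset_left)) (span_le.2 ?_))
  · obtain ⟨hp, hpj⟩ := mem_inf.1 hp
    have hcomp : homogeneousComponent j p = p := by
      rw [homogeneousComponent_of_mem hpj, if_pos rfl]
    have hmap := mem_map_of_mem (f := homogeneousComponent j) hp
    rw [map_span, hcomp] at hmap
    refine span_le.2 ?_ hmap
    rintro _ ⟨_, ⟨i, hi, rfl⟩, rfl⟩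
    rw [homogeneousComponent_of_mem (hf i)]
    split_ifs with h
    · exact subset_span ⟨i, ⟨hi, h.symm⟩, rfl⟩
    · exact zero_mem _
  · rintro _ ⟨i, ⟨-, hi⟩, rfl⟩
    exact (show d i = j from hi) ▸ hf i

variable {n N : ℕ}

theorem lin_mem_homogeneousSubmodule (v : Fin n → ℝ) :
    lin n v ∈ homogeneousSubmodule (Fin n) ℂ 1 :=
  IsHomogeneous.sum _ _ _ fun i _ => isHomogeneous_C_mul_X _ i

theorem QB_mem_homogeneousSubmodule (x : Fin N → Fin n → ℝ) (I : Finset (Fin N)) :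
    QB x I ∈ homogeneousSubmodule (Fin n) ℂ (valu x I) := by
  simpa [valu, QB, pProd] using IsHomogeneous.prod (XofY x I) _ (fun _ => 1) fun i _ =>
    lin_mem_homogeneousSubmodule (x i)

theorem XofY_inter_self (x : Fin N → Fin n → ℝ) (I : Finset (Fin N)) : XofY x I ∩ I = ∅ :=
  Finset.eq_empty_of_forall_notMem fun _ hi =>
    (mem_XofY.1 (Finset.mem_inter.1 hi).1).1 (Finset.mem_inter.1 hi).2

theorem span_QB_image_eq_PplusOn {x : Fin N → Fin n → ℝ} {I' : Set (Finset (Fin N))}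
    (hI' : SemiExternal x I') : span ℂ (QB x '' I') = PplusOn x I' := by
  refine le_antisymm (span_le.2 ?_) (span_le.2 ?_)
  · rintro _ ⟨I, hI, rfl⟩
    exact subset_span ⟨XofY x I, ⟨I, hI, XofY_inter_self x I⟩, rfl⟩
  · rintro _ ⟨Y, ⟨I, hI, hYI⟩, rfl⟩
    have hIY : span ℝ (x '' ↑I) ≤ span ℝ (x '' (↑Y)ᶜ) := span_mono <| Set.image_mono
      fun i hi hiY => Finset.notMem_empty i (hYI ▸ Finset.mem_inter.2 ⟨hiY, hi⟩)
    refine span_le.2 ?_ (pProd_mem_span_QB x Y)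
    rintro _ ⟨J, ⟨hJ, hYJ⟩, rfl⟩
    exact subset_span ⟨J, hI'.2 I hI J hJ (hIY.trans hYJ), rfl⟩

end Basis

theorem semiexternal_QI_basis_general (n N : ℕ) (x : Fin N → Fin n → ℝ)
    (I' : Set (Finset (Fin N))) (hI' : SemiExternal x I') :
    LinearIndependent ℂ (fun I : {I // I ∈ I'} => QB x I.1) ∧
    Submodule.span ℂ (Set.range fun I : {I // I ∈ I'} => QB x I.1) = PplusOn x I' ∧
    Module.finrank ℂ (PplusOn x I') = I'.ncard ∧
    ∀ j : ℕ, Module.finrank ℂ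
        ↥(PplusOn x I' ⊓ MvPolynomial.homogeneousSubmodule (Fin n) ℂ j)
      = Set.ncard {I | I ∈ I' ∧ valu x I = j} := by
  have hindep : LinearIndepOn ℂ (QB x) I' := (linearIndepOn_QB x).mono hI'.1
  have hspan := span_QB_image_eq_PplusOn hI'
  refine ⟨hindep, by rw [← Set.image_eq_range, hspan], ?_, fun j => ?_⟩
  · rw [← hspan, hindep.finrank_span_image_eq_ncard]
  · rw [← hspan, span_image_inf_homogeneousSubmodule (QB_mem_homogeneousSubmodule x)]
    exact (hindep.mono Set.inter_subset_left).finrank_span_image_eq_ncard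

theorem semiexternal_QI_basis (n N : ℕ) (x : Fin N → Fin n → ℝ)
    (hx0 : ∀ i, x i ≠ 0) (hx : Submodule.span ℝ (Set.range x) = ⊤)
    (I' : Set (Finset (Fin N))) (hI' : SemiExternal x I') :
    LinearIndependent ℂ (fun I : {I // I ∈ I'} => QB x I.1) ∧
    Submodule.span ℂ (Set.range fun I : {I // I ∈ I'} => QB x I.1) = PplusOn x I' ∧
    Module.finrank ℂ (PplusOn x I') = I'.ncard ∧
    ∀ j : ℕ, Module.finrank ℂ
        ↥(PplusOn x I' ⊓ MvPolynomial.homogeneousSubmodule (Fin n) ℂ j)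
      = Set.ncard {I | I ∈ I' ∧ valu x I = j} :=
  semiexternal_QI_basis_general n N x I' hI'
end
end

section
/- If B ∈ 𝔹(X) is not I-internal, then Q_B = p_{X(B)} lies in the ideal J_-(X,I); equivalently, the set X(B) is I-long. -/
open MvPolynomial

attribute [local instance] Classical.propDecidable

noncomputable section

/-! If `b` is `I`-internally active in `B`, the hyperplane `F = span (B \ b)` catches every
element of `X` after `b`. An internal basis `B'` must leave `F` somewhere. If it does so at
some `i ≠ b`, then `i < b` and every element of `B` before `i` lies in `F`, so `i ∈ X(B)`.
Otherwise `B' \ b` spans a hyperplane inside `F`, hence equal to `F`, and `b` would be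
`I`-internally active in `B'` as well. -/

section LinearAlgebra

variable {K V ι : Type*} [Field K] [AddCommGroup V] [Module K V]

theorem Submodule.eq_of_le_of_sup_span_singleton_eq_top {W F : Submodule K V} {v : V}
    (hWF : W ≤ F) (hv : v ∉ F) (htop : W ⊔ K ∙ v = ⊤) : W = F := by
  have hdisj : (K ∙ v) ⊓ F = ⊥ := (Submodule.disjoint_span_singleton_of_notMem hv).symm.eq_bot
  calc W = W ⊔ (K ∙ v) ⊓ F := by rw [hdisj, sup_bot_eq]
    _ = (W ⊔ K ∙ v) ⊓ F := (sup_inf_assoc_of_le _ hWF).symm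
    _ = F := by rw [htop, top_inf_eq]

theorem Submodule.span_image_erase_sup_span_singleton [DecidableEq ι] (x : ι → V)
    {B : Finset ι} {b : ι} (hb : b ∈ B) :
    Submodule.span K (x '' ↑(B.erase b)) ⊔ K ∙ x b = Submodule.span K (x '' ↑B) := by
  conv_rhs => rw [← Finset.insert_erase hb]
  rw [Finset.coe_insert, Set.image_insert_eq, Submodule.span_insert, sup_comm]

end LinearAlgebra

section ActiveElements

theorem IsIndepSet.notMem_span_image_erase {n : ℕ} {ι : Type*} [DecidableEq ι]
    {x : ι → Fin n → ℝ} {B : Finset ι} (hB : IsIndepSet x B) {b : ι} (hb : b ∈ B) :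
    x b ∉ Submodule.span ℝ (x '' ↑(B.erase b)) := by
  simpa only [Finset.coe_erase] using LinearIndepOn.notMem_span (v := x) hB hb

variable {n N : ℕ} {x : Fin N → Fin n → ℝ}

theorem mem_XofY_of_lt_of_notMem_span_erase {B : Finset (Fin N)} {i b : Fin N} (hib : i < b)
    (hi : x i ∉ Submodule.span ℝ (x '' ↑(B.erase b))) : i ∈ XofY x B := by
  have hmem : ∀ j ∈ B, j ≤ i → x j ∈ Submodule.span ℝ (x '' ↑(B.erase b)) := fun j hj hji =>
    Submodule.subset_span ⟨j, Finset.mem_erase.mpr ⟨(hji.trans_lt hib).ne, hj⟩, rfl⟩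
  simp only [XofY, Finset.mem_filter, Finset.mem_univ, true_and]
  refine ⟨fun hiB => hi (hmem i hiB le_rfl), fun hspan => hi ?_⟩
  refine Submodule.span_le.mpr ?_ hspan
  rintro _ ⟨j, ⟨hjB, hji⟩, rfl⟩
  exact hmem j hjB hji.le

theorem IActive.of_span_image_erase_eq {Iset B B' : Finset (Fin N)} {b : Fin N}
    (hact : IActive x Iset B b) (hb : b ∈ B') (hspan : Submodule.span ℝ (x '' ↑(B'.erase b)) =
      Submodule.span ℝ (x '' ↑(B.erase b))) : IActive x Iset B' b :=
  ⟨hb, hact.2.1, fun j hj => hact.2.2 j (hspan ▸ hj)⟩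

theorem IActive.inter_XofY_nonempty {Iset B B' : Finset (Fin N)} {b : Fin N}
    (hB : IsIndepSet x B) (hact : IActive x Iset B b) (hB' : IInternal x Iset B') :
    (XofY x B ∩ B').Nonempty := by
  set F := Submodule.span ℝ (x '' ↑(B.erase b))
  have hbF : x b ∉ F := hB.notMem_span_image_erase hact.1
  by_cases hleave : ∃ i ∈ B'.erase b, x i ∉ F
  · obtain ⟨i, hi, hiF⟩ := hleave
    obtain ⟨hib, hiB'⟩ := Finset.mem_erase.mp hi
    exact ⟨i, Finset.mem_inter.mpr
      ⟨mem_XofY_of_lt_of_notMem_span_erase ((hact.2.2 i hiF).lt_of_ne hib) hiF, hiB'⟩⟩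
  push Not at hleave
  have hWF : Submodule.span ℝ (x '' ↑(B'.erase b)) ≤ F := by
    rw [Submodule.span_le]
    rintro _ ⟨i, hi, rfl⟩
    exact hleave i hi
  have hbB' : b ∈ B' := by
    by_contra hbB'
    rw [Finset.erase_eq_of_notMem hbB', hB'.1.2] at hWF
    exact hbF (hWF Submodule.mem_top)
  have htop := Submodule.span_image_erase_sup_span_singleton (K := ℝ) x hbB'
  rw [hB'.1.2] at htop
  exact absurd (hact.of_span_image_erase_eq hbB'
    (Submodule.eq_of_le_of_sup_span_singleton_eq_top hWF hbF htop)) (hB'.2 b)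

end ActiveElements

theorem not_internal_QB_long_general (n N : ℕ) (x : Fin N → Fin n → ℝ)
    (Iset : Finset (Fin N))
    (B : Finset (Fin N)) (hB : IsBasisSet x B) (hnot : ¬ IInternal x Iset B) :
    QB x B ∈ JminusOn x Iset ∧
    ∀ B' : Finset (Fin N), IInternal x Iset B' → ((XofY x B) ∩ B').Nonempty := by
  obtain ⟨b, hact⟩ : ∃ b, IActive x Iset B b := by
    by_contra h
    exact hnot ⟨hB, not_exists.mp h⟩
  have hlong : ∀ B', IInternal x Iset B' → (XofY x B ∩ B').Nonempty := fun _ hB' =>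
    hact.inter_XofY_nonempty hB.1 hB'
  exact ⟨Ideal.subset_span ⟨XofY x B, hlong, rfl⟩, hlong⟩

theorem not_internal_QB_long (n N : ℕ) (x : Fin N → Fin n → ℝ)
    (hx0 : ∀ i, x i ≠ 0) (hx : Submodule.span ℝ (Set.range x) = ⊤)
    (Iset : Finset (Fin N)) (hI : IsIndepSet x Iset)
    (hord : ∀ i ∈ Iset, ∀ j ∉ Iset, j < i)
    (B : Finset (Fin N)) (hB : IsBasisSet x B) (hnot : ¬ IInternal x Iset B) :
    QB x B ∈ JminusOn x Iset ∧
    ∀ B' : Finset (Fin N), IInternal x Iset B' → ((XofY x B) ∩ B').Nonempty :=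
  not_internal_QB_long_general n N x Iset B hB hnot
end
end

section
/- For a semi-external 𝕀' and any S ∈ S(X,𝕀'), every polynomial p_Y with Y ⊂ X such that X\Y contains some I ∈ 𝕀' is annihilated by q(D) for every q ∈ Π^0_{#(X\S)}(S^⊥); i.e., P_+(X,𝕀') ⊂ ker Ideal{Π^0_{#(X\S)}(S^⊥) : S ∈ S(X,𝕀')}. -/
open MvPolynomial

attribute [local instance] Classical.propDecidable

noncomputable section

/-! The map `p ↦ p(D)` is an algebra homomorphism into the commutative algebra generated by the
partial derivatives, and it satisfies the commutator rule `q(D)(ℓ_η f) = ℓ_η q(D) f + (D_η q)(D) f`.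
So for `q ∈ Π⁰_m(S^⊥)` the operator `q(D)` commutes with every factor `ℓ_{x_i}` of `p_Y` with
`x_i ∈ S`, leaving `q(D)` applied to `p_{Y \ S}`, which is homogeneous of degree `#(Y \ S)`.
Write `S = span I₀` with `I₀ ∉ 𝕀'`, and let `I ∈ 𝕀'` be disjoint from `Y`. If `I ⊆ S`, then
`span I ≤ span I₀` and semi-externality would put `I₀` in `𝕀'`; so some `x_i`, `i ∈ I`, lies outside
both `S` and `Y`, whence `#(Y \ S) < #(X \ S) = m` and the order-`m` operator `q(D)` kills
`p_{Y \ S}`. -/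

namespace MvPolynomial

variable {R σ : Type*} [CommSemiring R]

theorem pderiv_pderiv_comm (i j : σ) (f : MvPolynomial σ R) :
    pderiv i (pderiv j f) = pderiv j (pderiv i f) := by
  induction f using MvPolynomial.induction_on with
  | C a => simp
  | add p q hp hq => simp [hp, hq]
  | mul_X p k ih =>
    have hX : ∀ a b : σ, pderiv a (pderiv b (X k : MvPolynomial σ R)) = 0 := fun a b => by
      simp [pderiv_X, Pi.single_apply, apply_ite]
    simp only [pderiv_mul, map_add, ih, hX, mul_zero, add_zero]
    ring

def LowersDegreeBy (m : ℕ) (T : Module.End R (MvPolynomial σ R)) : Prop :=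
  ∀ ⦃j : ℕ⦄ ⦃f : MvPolynomial σ R⦄, f.IsHomogeneous j →
    (T f).IsHomogeneous (j - m) ∧ (j < m → T f = 0)

namespace LowersDegreeBy

variable {m k : ℕ} {S T : Module.End R (MvPolynomial σ R)}

theorem zero : LowersDegreeBy m (0 : Module.End R (MvPolynomial σ R)) :=
  fun _ _ _ => ⟨isHomogeneous_zero .., fun _ => rfl⟩

theorem one : LowersDegreeBy 0 (1 : Module.End R (MvPolynomial σ R)) :=
  fun _ _ hf => ⟨hf, fun h => absurd h (Nat.not_lt_zero _)⟩

theorem add (hS : LowersDegreeBy m S) (hT : LowersDegreeBy m T) : LowersDegreeBy m (S + T) :=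
  fun _ _ hf => ⟨(hS hf).1.add (hT hf).1, fun h => by simp [(hS hf).2 h, (hT hf).2 h]⟩

theorem smul (c : R) (hT : LowersDegreeBy m T) : LowersDegreeBy m (c • T) :=
  fun _ _ hf =>
    ⟨by rw [LinearMap.smul_apply, smul_eq_C_mul]; exact (hT hf).1.C_mul c,
      fun h => by simp [(hT hf).2 h]⟩

theorem mul (hS : LowersDegreeBy m S) (hT : LowersDegreeBy k T) :
    LowersDegreeBy (m + k) (S * T) := by
  intro j f hf
  have hTf := hT hf
  have hSTf := hS hTf.1
  refine ⟨by simpa [Nat.sub_add_eq, Nat.sub_right_comm] using hSTf.1, fun h => ?_⟩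
  rw [Module.End.mul_apply]
  by_cases hjk : j < k
  · rw [hTf.2 hjk, map_zero]
  · exact hSTf.2 (by omega)

theorem pow (hT : LowersDegreeBy 1 T) (k : ℕ) : LowersDegreeBy k (T ^ k) := by
  induction k with
  | zero => exact one
  | succ k ih => rw [pow_succ]; exact ih.mul hT

end LowersDegreeBy

theorem lowersDegreeBy_pderiv (i : σ) : LowersDegreeBy 1 (pderiv (R := R) i).toLinearMap := by
  refine fun j f hf => ⟨hf.pderiv, fun hj => ?_⟩
  obtain rfl : j = 0 := by omega
  rw [← totalDegree_zero_iff_isHomogeneous, totalDegree_eq_zero_iff_eq_C] at hf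
  rw [Derivation.coeFn_coe, hf, pderiv_C]

end MvPolynomial

section DifferentialOperators

open scoped IsMulCommutative

variable {n : ℕ}

abbrev pderivAlgebra (n : ℕ) : Subalgebra ℂ (Module.End ℂ (MvPolynomial (Fin n) ℂ)) :=
  Algebra.adjoin ℂ (Set.range fun i : Fin n => (pderiv i).toLinearMap)

instance : IsMulCommutative (pderivAlgebra n) :=
  Algebra.isMulCommutative_adjoin ℂ <| by
    rintro _ ⟨i, rfl⟩ _ ⟨j, rfl⟩
    exact LinearMap.ext (pderiv_pderiv_comm i j)

def pderivGen (i : Fin n) : pderivAlgebra n :=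
  ⟨(pderiv i).toLinearMap, Algebra.subset_adjoin ⟨i, rfl⟩⟩

def diffOpHom (n : ℕ) : MvPolynomial (Fin n) ℂ →ₐ[ℂ] Module.End ℂ (MvPolynomial (Fin n) ℂ) :=
  (pderivAlgebra n).val.comp (aeval pderivGen)

theorem diffOpHom_X (i : Fin n) : diffOpHom n (X i) = (pderiv i).toLinearMap := by
  simp [diffOpHom, pderivGen]

theorem diffOpHom_C (c : ℂ) : diffOpHom n (C c) = c • 1 := by
  rw [← algebraMap_eq, AlgHom.commutes, Algebra.algebraMap_eq_smul_one]

theorem diffOpHom_monomial (m : Fin n →₀ ℕ) (c : ℂ) :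
    diffOpHom n (monomial m c) =
      c • ((List.finRange n).map fun i => (pderiv i).toLinearMap ^ m i).prod := by
  have hprod : m.prod (fun i k => pderivGen i ^ k) =
      ((List.finRange n).map fun i => pderivGen i ^ m i).prod := by
    rw [Finsupp.prod_fintype _ _ fun _ => pow_zero _, Fin.prod_univ_def]
  rw [diffOpHom, AlgHom.comp_apply, aeval_monomial, hprod, ← Algebra.smul_def, map_smul,
    Subalgebra.coe_val, SubmonoidClass.coe_list_prod, List.map_map]
  rfl

theorem pDop_eq_diffOpHom (p : MvPolynomial (Fin n) ℂ) : pDop p = diffOpHom n p := by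
  induction p using MvPolynomial.induction_on' with
  | monomial m c =>
    rw [diffOpHom_monomial]
    exact sum_monomial_eq (by simp)
  | add p q hp hq =>
    rw [map_add, ← hp, ← hq]
    exact Finsupp.sum_add_index (by simp) fun _ _ _ _ => add_smul ..

theorem lowersDegreeBy_diffOpHom_monomial (s : Fin n →₀ ℕ) :
    LowersDegreeBy s.degree (diffOpHom n (monomial s 1)) := by
  induction s using Finsupp.induction_linear with
  | zero => simpa using LowersDegreeBy.one
  | add f g hf hg =>
    rw [← one_mul (1 : ℂ), ← monomial_mul, map_mul, map_add]
    exact hf.mul hg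
  | single i k =>
    rw [← X_pow_eq_monomial, map_pow, diffOpHom_X, Finsupp.degree_single]
    exact (lowersDegreeBy_pderiv i).pow k

theorem lowersDegreeBy_diffOpHom {m : ℕ} {q : MvPolynomial (Fin n) ℂ} (hq : q.IsHomogeneous m) :
    LowersDegreeBy m (diffOpHom n q) := by
  rw [q.as_sum, map_sum]
  refine Finset.sum_induction _ _ (fun _ _ => LowersDegreeBy.add) LowersDegreeBy.zero
    fun s hs => ?_
  have hdeg : s.degree = m := by
    rw [Finsupp.degree_eq_weight_one]
    exact hq (mem_support_iff.mp hs)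
  rw [← mul_one (coeff s q), ← smul_eq_mul, ← smul_monomial, map_smul, ← hdeg]
  exact (lowersDegreeBy_diffOpHom_monomial s).smul _

theorem pDop_eq_zero_of_isHomogeneous {m j : ℕ} {q f : MvPolynomial (Fin n) ℂ}
    (hq : q.IsHomogeneous m) (hf : f.IsHomogeneous j) (hjm : j < m) : pDop q f = 0 := by
  rw [pDop_eq_diffOpHom]
  exact (lowersDegreeBy_diffOpHom hq hf).2 hjm

def dirDeriv (η : Fin n → ℝ) : Derivation ℂ (MvPolynomial (Fin n) ℂ) (MvPolynomial (Fin n) ℂ) :=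
  ∑ i, (η i : ℂ) • pderiv i

theorem dirDeriv_apply (η : Fin n → ℝ) (f : MvPolynomial (Fin n) ℂ) :
    dirDeriv η f = ∑ i, (η i : ℂ) • pderiv i f := by
  rw [dirDeriv, ← Derivation.coeFnAddMonoidHom_apply, map_sum, Finset.sum_apply]
  rfl

theorem pderiv_lin (η : Fin n → ℝ) (i : Fin n) : pderiv i (lin n η) = C (η i : ℂ) := by
  simp [lin, pderiv_X, Pi.single_apply]

theorem dirDeriv_X (η : Fin n → ℝ) (i : Fin n) : dirDeriv η (X i) = C (η i : ℂ) := by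
  simp [dirDeriv_apply, pderiv_X, Pi.single_apply, C_eq_smul_one]

theorem pDop_lin_apply (η : Fin n → ℝ) (f : MvPolynomial (Fin n) ℂ) :
    pDop (lin n η) f = dirDeriv η f := by
  simp only [pDop_eq_diffOpHom, lin, map_sum, map_mul, diffOpHom_X, diffOpHom_C, dirDeriv_apply,
    LinearMap.sum_apply, Module.End.mul_apply, LinearMap.smul_apply, Module.End.one_apply]
  rfl

theorem diffOpHom_apply_lin_mul (η : Fin n → ℝ) (q f : MvPolynomial (Fin n) ℂ) :
    diffOpHom n q (lin n η * f) = lin n η * diffOpHom n q f + diffOpHom n (dirDeriv η q) f := by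
  induction q using MvPolynomial.induction_on generalizing f with
  | C c => simp
  | add p q hp hq => simp only [map_add, LinearMap.add_apply, hp, hq]; ring
  | mul_X p i ih =>
    rw [Derivation.leibniz, dirDeriv_X, smul_eq_mul, smul_eq_mul, mul_comm (X i)]
    simp only [map_mul, map_add, Module.End.mul_apply, LinearMap.add_apply, diffOpHom_X,
      diffOpHom_C, Derivation.coeFn_coe, pderiv_mul, pderiv_lin, ih, C_mul', map_smul,
      LinearMap.smul_apply, Module.End.one_apply]
    ring

theorem isHomogeneous_lin (v : Fin n → ℝ) : (lin n v).IsHomogeneous 1 :=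
  IsHomogeneous.sum _ _ _ fun i _ => isHomogeneous_C_mul_X _ i

theorem isHomogeneous_pProd {ι : Type*} (x : ι → Fin n → ℝ) (Y : Finset ι) :
    (pProd x Y).IsHomogeneous Y.card := by
  simpa [pProd] using IsHomogeneous.prod Y _ (fun _ => 1) fun i _ => isHomogeneous_lin (x i)

theorem pDop_pProd_mul {ι : Type*} (x : ι → Fin n → ℝ) {q : MvPolynomial (Fin n) ℂ}
    {Z : Finset ι} (hq : ∀ i ∈ Z, pDop (lin n (x i)) q = 0) (f : MvPolynomial (Fin n) ℂ) :
    pDop q (pProd x Z * f) = pProd x Z * pDop q f := by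
  induction Z using Finset.induction_on generalizing f with
  | empty => simp [pProd]
  | insert a Z ha ih =>
    have hDq : dirDeriv (x a) q = 0 := by
      rw [← pDop_lin_apply]
      exact hq a (Finset.mem_insert_self a Z)
    rw [pProd, Finset.prod_insert ha, mul_assoc, ← pProd, pDop_eq_diffOpHom,
      diffOpHom_apply_lin_mul, hDq, map_zero, LinearMap.zero_apply, add_zero,
      ← pDop_eq_diffOpHom, ih (fun i hi => hq i (Finset.mem_insert_of_mem hi)), mul_assoc]

theorem pDop_pProd_eq_zero_of_card_lt {ι : Type*} (x : ι → Fin n → ℝ)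
    {S : Submodule ℝ (Fin n → ℝ)} {m : ℕ} {q : MvPolynomial (Fin n) ℂ} (hq : q ∈ homPerp n m S)
    {Y : Finset ι} (hY : (Y.filter fun i => x i ∉ S).card < m) : pDop q (pProd x Y) = 0 := by
  have hsplit : pProd x Y =
      pProd x (Y.filter fun i => x i ∈ S) * pProd x (Y.filter fun i => x i ∉ S) :=
    (Finset.prod_filter_mul_prod_filter_not Y _ _).symm
  rw [hsplit, pDop_pProd_mul x (fun i hi => hq.2 (x i) (Finset.mem_filter.mp hi).2),
    pDop_eq_zero_of_isHomogeneous ((mem_homogeneousSubmodule _ _).mp hq.1)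
      (isHomogeneous_pProd x _) hY, mul_zero]

theorem card_filter_notMem_lt_mult {ι : Type*} [Fintype ι] (x : ι → Fin n → ℝ)
    {S : Submodule ℝ (Fin n → ℝ)} {Y : Finset ι} {i : ι} (hiY : i ∉ Y) (hiS : x i ∉ S) :
    (Y.filter fun j => x j ∉ S).card < mult x S := by
  refine Finset.card_lt_card (Finset.ssubset_iff_of_subset ?_ |>.mpr ⟨i, ?_, ?_⟩)
  · exact Finset.filter_subset_filter _ (Finset.subset_univ Y)
  · simpa using hiS
  · simp [hiY]

theorem SemiExternal.exists_mem_notMem_span {N : ℕ} {x : Fin N → Fin n → ℝ}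
    {I' : Set (Finset (Fin N))} (hI' : SemiExternal x I') {I J : Finset (Fin N)} (hI : I ∈ I')
    (hJ : IsIndepSet x J) (hJI' : J ∉ I') : ∃ i ∈ I, x i ∉ Submodule.span ℝ (x '' ↑J) := by
  by_contra! h
  exact hJI' <| hI'.2 I hI J hJ <| Submodule.span_le.mpr <| by
    rintro _ ⟨i, hi, rfl⟩
    exact h i hi

theorem pDop_pProd_eq_zero {N : ℕ} {x : Fin N → Fin n → ℝ} {I' : Set (Finset (Fin N))}
    (hI' : SemiExternal x I') {S : Submodule ℝ (Fin n → ℝ)} (hS : S ∈ exSpans x I')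
    {Y : Finset (Fin N)} (hY : ∃ I ∈ I', Y ∩ I = ∅) {q : MvPolynomial (Fin n) ℂ}
    (hq : q ∈ homPerp n (mult x S) S) : pDop q (pProd x Y) = 0 := by
  obtain ⟨J, hJ, hJI', rfl⟩ := hS
  obtain ⟨I, hI, hYI⟩ := hY
  obtain ⟨i, hiI, hiS⟩ := hI'.exists_mem_notMem_span hI hJ hJI'
  have hiY : i ∉ Y := fun hiY => by simpa [hYI] using Finset.mem_inter.mpr ⟨hiY, hiI⟩
  exact pDop_pProd_eq_zero_of_card_lt x hq (card_filter_notMem_lt_mult x hiY hiS)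

theorem mem_dKer_span {G : Set (MvPolynomial (Fin n) ℂ)} {f : MvPolynomial (Fin n) ℂ}
    (h : ∀ g ∈ G, pDop g f = 0) : f ∈ dKer (Ideal.span G) := by
  simp only [dKer, Submodule.mem_iInf, LinearMap.mem_ker, pDop_eq_diffOpHom] at h ⊢
  intro p hp
  induction hp using Submodule.span_induction with
  | mem g hg => exact h g hg
  | zero => rw [map_zero, LinearMap.zero_apply]
  | add a b _ _ ha hb => rw [map_add, LinearMap.add_apply, ha, hb, add_zero]
  | smul r a _ ha => rw [smul_eq_mul, map_mul, Module.End.mul_apply, ha, map_zero]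

end DifferentialOperators

theorem semiexternal_annihilation_general (n N : ℕ) (x : Fin N → Fin n → ℝ)
    (I' : Set (Finset (Fin N))) (hI' : SemiExternal x I') :
    (∀ S ∈ exSpans x I', ∀ Y : Finset (Fin N), (∃ I ∈ I', Y ∩ I = ∅) →
      ∀ q ∈ homPerp n (mult x S) S, pDop q (pProd x Y) = 0) ∧
    PplusOn x I' ≤ dKer (Ideal.span {p | ∃ S ∈ exSpans x I',
      p ∈ homPerp n (mult x S) S}) := by
  refine ⟨fun S hS Y hY q hq => pDop_pProd_eq_zero hI' hS hY hq, Submodule.span_le.mpr ?_⟩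
  rintro _ ⟨Y, hY, rfl⟩
  exact mem_dKer_span fun q ⟨S, hS, hq⟩ => pDop_pProd_eq_zero hI' hS hY hq

theorem semiexternal_annihilation (n N : ℕ) (x : Fin N → Fin n → ℝ)
    (hx0 : ∀ i, x i ≠ 0) (hx : Submodule.span ℝ (Set.range x) = ⊤)
    (I' : Set (Finset (Fin N))) (hI' : SemiExternal x I') :
    (∀ S ∈ exSpans x I', ∀ Y : Finset (Fin N), (∃ I ∈ I', Y ∩ I = ∅) →
      ∀ q ∈ homPerp n (mult x S) S, pDop q (pProd x Y) = 0) ∧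
    PplusOn x I' ≤ dKer (Ideal.span {p | ∃ S ∈ exSpans x I',
      p ∈ homPerp n (mult x S) S}) :=
  semiexternal_annihilation_general n N x I' hI'
end
end
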